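/- Let α ∈ [0,2) and X ⊆ H a vector subspace with its own norm. If there is A > 0 such that σ_{f−f*}((−δ,δ]) ≤ A‖f‖²_X δ^α for all f ∈ X and δ > 0, then ‖P_{t,s} − P‖²_{X→H} ≤ (2^{α+1}/(2−α)) A (t−s)^{−α} for all t > s. Conversely, if ‖P_{t,s} − P‖²_{X→H} ≤ B (t−s)^{−α} for all t > s, then σ_{f−f*}((−δ,δ]) ≤ (ρ(α)/2^α) B ‖f‖²_X δ^α for all f ∈ X and δ > 0. -/

import Mathlib

open MeasureTheory Real Set intervalIntegral

/-- The Fejér-type kernel `F_τ(x) = (sin(τx/2)/(τx/2))²`. -/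
noncomputable def Fker (τ x : ℝ) : ℝ := (Real.sin (τ * x / 2) / (τ * x / 2)) ^ 2

/-- `ρ(α) = inf_{x>0} x^{2-α}/sin²x` (points with `sin x = 0` excluded). -/
noncomputable def rho (α : ℝ) : ℝ :=
  sInf {r : ℝ | ∃ x > 0, Real.sin x ≠ 0 ∧ r = x ^ (2 - α) / Real.sin x ^ 2}

/-!
Both parts compare `‖P_{s,t} f - P f‖² = ∫ F_T dσ` (`T = t - s`, `F_T(x) = sinc (T x / 2)²`)
with the mass `σ((-δ, δ])` of a window of width `δ ~ 1 / T`.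

Direct part: by the layer-cake formula `∫ F_T dσ = ∫₀¹ σ {F_T > u} du`, and `F_T(x) ≤ (T x / 2)⁻²`
puts `{F_T > u}` inside `(-r, r]` with `r = 2 / (T √u)`. The decay hypothesis bounds the integrand
by `A (2 / T)^α u^(-α/2)`, which is integrable on `(0, 1]` because `α < 2`.

Converse: `sinc` decreases on `[0, π]`, so for `x ∈ (0, π)` and `T = 2 x / δ` we have
`F_T ≥ (sin x / x)²` on `(-δ, δ] \ {0}`, whence `σ((-δ, δ]) ≤ x^(2-α) / sin² x · B δ^α / 2^α`.
The infimum defining `ρ(α)` may be taken over `(0, π)`, since `sin²` is `π`-periodic and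
`x^(2-α)` is increasing.
-/

namespace Real

lemma sinc_nonneg_of_mem_Icc {x : ℝ} (hx : x ∈ Icc 0 π) : 0 ≤ sinc x := by
  rcases hx.1.eq_or_lt with rfl | hx0
  · simp
  · rw [sinc_of_ne_zero hx0.ne']
    exact div_nonneg (sin_nonneg_of_nonneg_of_le_pi hx.1 hx.2) hx0.le

lemma antitoneOn_sinc : AntitoneOn sinc (Icc 0 π) := by
  intro a ha b hb hab
  rcases ha.1.eq_or_lt with rfl | ha0
  · simpa using sinc_le_one b
  have hslope := strictConcaveOn_sin_Icc.concaveOn.antitoneOn_slope_gt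
    (left_mem_Icc.2 pi_pos.le) ⟨ha, ha0⟩ ⟨hb, ha0.trans_le hab⟩ hab
  simpa [sinc_eq_dslope, dslope_of_ne _ ha0.ne', dslope_of_ne _ (ha0.trans_le hab).ne'] using hslope

lemma sinc_sq_le_sinc_sq {v x : ℝ} (hvx : |v| ≤ x) (hx : x ≤ π) : sinc x ^ 2 ≤ sinc v ^ 2 := by
  have hv : |v| ∈ Icc 0 π := ⟨abs_nonneg v, hvx.trans hx⟩
  have hsinc_abs : sinc |v| = sinc v := by
    rcases abs_choice v with h | h <;> simp [h]
  rw [← hsinc_abs]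
  exact pow_le_pow_left₀ (sinc_nonneg_of_mem_Icc ⟨hv.1.trans hvx, hx⟩)
    (antitoneOn_sinc hv ⟨hv.1.trans hvx, hx⟩ hvx) 2

lemma sin_sub_int_mul_pi_sq (x : ℝ) (n : ℤ) : sin (x - n * π) ^ 2 = sin x ^ 2 := by
  rcases Int.even_or_odd n with hn | hn <;> simp [sin_sub_int_mul_pi, hn.neg_one_zpow]

end Real

lemma Fker_nonneg (τ x : ℝ) : 0 ≤ Fker τ x := sq_nonneg _

lemma Fker_le_inv_sq (τ x : ℝ) : Fker τ x ≤ ((τ * x / 2) ^ 2)⁻¹ := by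
  rw [Fker, div_pow, div_eq_mul_inv]
  exact mul_le_of_le_one_left (inv_nonneg.2 (sq_nonneg _)) (sin_sq_le_one _)

lemma Fker_le_one (τ x : ℝ) : Fker τ x ≤ 1 := by
  rcases eq_or_ne (τ * x / 2) 0 with h | h
  · simp [Fker, h]
  · rw [Fker, div_pow]
    exact div_le_one_of_le₀ sin_sq_le_sq (sq_nonneg _)

lemma Fker_eq_sinc_sq {τ x : ℝ} (h : τ * x / 2 ≠ 0) : Fker τ x = sinc (τ * x / 2) ^ 2 := by
  rw [Fker, sinc_of_ne_zero h]

lemma integrable_Fker (τ : ℝ) (ν : Measure ℝ) [IsFiniteMeasure ν] : Integrable (Fker τ) ν := by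
  refine Integrable.of_bound (C := 1) ?_ (ae_of_all _ fun x => ?_)
  · exact (by unfold Fker; fun_prop : Measurable (Fker τ)).aestronglyMeasurable
  · rw [Real.norm_of_nonneg (Fker_nonneg τ x)]
    exact Fker_le_one τ x

lemma setOf_lt_Fker_subset {T t : ℝ} (hT : 0 < T) (ht : 0 < t) :
    {x | t < Fker T x} ⊆ Ioc (-(2 / T * t ^ (-(1 / 2) : ℝ))) (2 / T * t ^ (-(1 / 2) : ℝ)) := by
  intro x hx
  have hlt : t < ((T * x / 2) ^ 2)⁻¹ := hx.trans_le (Fker_le_inv_sq T x)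
  have hpos : 0 < (T * x / 2) ^ 2 := (sq_nonneg _).lt_of_ne fun h => by
    rw [← h, inv_zero] at hlt
    exact ht.not_gt hlt
  have hsq : x ^ 2 < (2 / T * t ^ (-(1 / 2) : ℝ)) ^ 2 := by
    rw [lt_inv_comm₀ ht hpos] at hlt
    have hr : (2 / T * t ^ (-(1 / 2) : ℝ)) ^ 2 = (2 / T) ^ 2 * t⁻¹ := by
      rw [mul_pow, ← rpow_natCast (t ^ _), ← rpow_mul ht.le]
      norm_num [rpow_neg_one]
    rw [hr]
    calc x ^ 2 = (2 / T) ^ 2 * (T * x / 2) ^ 2 := by field_simp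
      _ < (2 / T) ^ 2 * t⁻¹ := by gcongr
  obtain ⟨h1, h2⟩ := abs_lt_of_sq_lt_sq' hsq (by positivity)
  exact ⟨h1, h2.le⟩

lemma exists_mem_Ioo_rpow_div_sin_sq_le {α x : ℝ} (hα : α ≤ 2) (hx : 0 < x) (hs : sin x ≠ 0) :
    ∃ y ∈ Ioo 0 π, y ^ (2 - α) / sin y ^ 2 ≤ x ^ (2 - α) / sin x ^ 2 := by
  set y := x - ⌊x / π⌋ * π
  have hsq : sin y ^ 2 = sin x ^ 2 := sin_sub_int_mul_pi_sq x _
  have hy0 : 0 ≤ y := sub_nonneg.2 ((le_div_iff₀ pi_pos).1 (Int.floor_le _))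
  have hyπ : y < π := by
    have := (div_lt_iff₀ pi_pos).1 (Int.lt_floor_add_one (x / π))
    linarith
  have hyx : y ≤ x :=
    sub_le_self _ (mul_nonneg (Int.cast_nonneg (Int.floor_nonneg.2 (by positivity))) pi_pos.le)
  have hy : 0 < y :=
    hy0.lt_of_ne fun h => hs (pow_eq_zero_iff two_ne_zero |>.1 (by simp [← hsq, ← h]))
  refine ⟨y, ⟨hy, hyπ⟩, ?_⟩
  rw [hsq]
  gcongr

lemma le_rho_mul {α M D : ℝ} (hα : α ≤ 2) (hD : 0 ≤ D)
    (h : ∀ x ∈ Ioo 0 π, M ≤ x ^ (2 - α) / sin x ^ 2 * D) : M ≤ rho α * D := by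
  have hne : {r : ℝ | ∃ x > 0, sin x ≠ 0 ∧ r = x ^ (2 - α) / sin x ^ 2}.Nonempty :=
    ⟨_, π / 2, by positivity, by simp, rfl⟩
  rw [rho, mul_comm, ← smul_eq_mul, ← Real.sInf_smul_of_nonneg hD]
  refine le_csInf hne.smul_set ?_
  rintro _ ⟨_, ⟨x, hx, hs, rfl⟩, rfl⟩
  simp only [smul_eq_mul]
  obtain ⟨y, hy, hle⟩ := exists_mem_Ioo_rpow_div_sin_sq_le hα hx hs
  rw [mul_comm]
  exact (h y hy).trans (by gcongr)

section FiniteMeasure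

variable {ν : Measure ℝ} [IsFiniteMeasure ν] {α C : ℝ}

lemma measureReal_setOf_lt_Fker_le {T t : ℝ} (hT : 0 < T) (ht : 0 < t)
    (h : ∀ δ > 0, ν.real (Ioc (-δ) δ) ≤ C * δ ^ α) :
    ν.real {x | t < Fker T x} ≤ C * (2 / T) ^ α * t ^ (-α / 2) := by
  refine (measureReal_mono (setOf_lt_Fker_subset hT ht)).trans ((h _ (by positivity)).trans_eq ?_)
  rw [mul_rpow (by positivity) (by positivity), ← rpow_mul ht.le]
  ring_nf

lemma integral_Fker_le_of_measureReal_Ioc_le (hα : α < 2) {T : ℝ} (hT : 0 < T)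
    (h : ∀ δ > 0, ν.real (Ioc (-δ) δ) ≤ C * δ ^ α) :
    ∫ x, Fker T x ∂ν ≤ 2 ^ (α + 1) / (2 - α) * C * T ^ (-α) := by
  have hexp : -1 < -α / 2 := by linarith
  have hvanish : ∀ t ∈ Ioi (0 : ℝ) \ Ioc 0 1, ν.real {x | t < Fker T x} = 0 := by
    rintro t ⟨ht0, ht⟩
    have h1 : 1 < t := not_le.1 fun h => ht ⟨ht0, h⟩
    have hempty : {x | t < Fker T x} = ∅ :=
      eq_empty_of_forall_notMem fun x hx => (Fker_le_one T x).not_gt (h1.trans hx)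
    simp [hempty]
  have hint : IntegrableOn (fun t : ℝ => C * (2 / T) ^ α * t ^ (-α / 2)) (Ioc 0 1) :=
    (intervalIntegrable_iff_integrableOn_Ioc_of_le zero_le_one).1
      ((intervalIntegral.intervalIntegrable_rpow' hexp).const_mul _)
  calc ∫ x, Fker T x ∂ν = ∫ t in Ioi 0, ν.real {x | t < Fker T x} :=
        (integrable_Fker T ν).integral_eq_integral_meas_lt (ae_of_all _ (Fker_nonneg T))
    _ = ∫ t in Ioc 0 1, ν.real {x | t < Fker T x} :=
        setIntegral_eq_of_subset_of_forall_sdiff_eq_zero measurableSet_Ioi Ioc_subset_Ioi_self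
          hvanish
    _ ≤ ∫ t in Ioc 0 1, C * (2 / T) ^ α * t ^ (-α / 2) :=
        integral_mono_of_nonneg (ae_of_all _ fun _ => measureReal_nonneg) hint
          ((ae_restrict_iff' measurableSet_Ioc).2 (ae_of_all _ fun t ht =>
            measureReal_setOf_lt_Fker_le hT ht.1 h))
    _ = 2 ^ (α + 1) / (2 - α) * C * T ^ (-α) := by
      rw [← intervalIntegral.integral_of_le zero_le_one, intervalIntegral.integral_const_mul,
        integral_rpow (Or.inl hexp), one_rpow, zero_rpow (by linarith), rpow_add two_pos,
        rpow_one, div_rpow two_pos.le hT.le, rpow_neg hT.le]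
      field_simp
      ring

/-- The point `0` is removed because `Fker T 0 = 0` (junk value of `sin 0 / 0`) although the
kernel tends to `1` there. -/
lemma sinc_sq_mul_measureReal_Ioc_le_integral_Fker (hν0 : ν {0} = 0) {x δ : ℝ}
    (hx : x ∈ Ioc 0 π) (hδ : 0 < δ) :
    sinc x ^ 2 * ν.real (Ioc (-δ) δ) ≤ ∫ y, Fker (2 * x / δ) y ∂ν := by
  have hs : MeasurableSet (Ioc (-δ) δ \ {0}) := measurableSet_Ioc.diff (measurableSet_singleton 0)
  have hbound : ∀ y ∈ Ioc (-δ) δ \ {0}, sinc x ^ 2 ≤ Fker (2 * x / δ) y := by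
    rintro y ⟨hyδ, hy0 : y ≠ 0⟩
    have harg : 2 * x / δ * y / 2 = x * y / δ := by ring
    have hne : x * y / δ ≠ 0 := by have := hx.1.ne'; have := hδ.ne'; positivity
    have habs : |x * y / δ| ≤ x := by
      rw [abs_div, abs_mul, abs_of_pos hx.1, abs_of_pos hδ, div_le_iff₀ hδ]
      exact mul_le_mul_of_nonneg_left (abs_le.2 ⟨hyδ.1.le, hyδ.2⟩) hx.1.le
    rw [Fker_eq_sinc_sq (harg ▸ hne), harg]
    exact sinc_sq_le_sinc_sq habs hx.2
  calc sinc x ^ 2 * ν.real (Ioc (-δ) δ) = sinc x ^ 2 * ν.real (Ioc (-δ) δ \ {0}) := by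
        rw [measureReal_sdiff_null (by simp [measureReal_def, hν0])]
    _ ≤ ∫ y in Ioc (-δ) δ \ {0}, Fker (2 * x / δ) y ∂ν :=
        setIntegral_ge_of_const_le_real hs (measure_ne_top ν _) hbound
          (integrable_Fker _ ν).integrableOn
    _ ≤ ∫ y, Fker (2 * x / δ) y ∂ν :=
        setIntegral_le_integral (integrable_Fker _ ν) (ae_of_all _ (Fker_nonneg _))

lemma measureReal_Ioc_le_of_integral_Fker_le (hν0 : ν {0} = 0) (hα : α ≤ 2) (hC : 0 ≤ C)
    {δ : ℝ} (hδ : 0 < δ) (h : ∀ T > 0, ∫ x, Fker T x ∂ν ≤ C * T ^ (-α)) :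
    ν.real (Ioc (-δ) δ) ≤ rho α / 2 ^ α * C * δ ^ α := by
  have key : ∀ x ∈ Ioo 0 π,
      ν.real (Ioc (-δ) δ) ≤ x ^ (2 - α) / sin x ^ 2 * (C * δ ^ α / 2 ^ α) := by
    intro x hx
    have hsin : 0 < sin x := sin_pos_of_pos_of_lt_pi hx.1 hx.2
    have hT : 0 < 2 * x / δ := div_pos (mul_pos two_pos hx.1) hδ
    have hle := (sinc_sq_mul_measureReal_Ioc_le_integral_Fker hν0 (Ioo_subset_Ioc_self hx) hδ).trans
      (h _ hT)
    rw [sinc_of_ne_zero hx.1.ne', div_pow,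
      ← le_div_iff₀' (div_pos (pow_pos hsin 2) (pow_pos hx.1 2))] at hle
    refine hle.trans_eq ?_
    rw [rpow_neg hT.le, div_rpow (mul_pos two_pos hx.1).le hδ.le, mul_rpow zero_le_two hx.1.le,
      rpow_sub hx.1, rpow_two]
    field_simp
  calc ν.real (Ioc (-δ) δ) ≤ rho α * (C * δ ^ α / 2 ^ α) := le_rho_mul hα (by positivity) key
    _ = rho α / 2 ^ α * C * δ ^ α := by ring

end FiniteMeasure

theorem stmt10_general
    {H : Type*} [NormedAddCommGroup H] [InnerProductSpace ℂ H]
    (U : ℝ → H →L[ℂ] H)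
    -- `P` is the orthogonal projection onto the fixed vectors of the group
    (P : H →L[ℂ] H)
    -- `μ f` is the spectral measure `σ_{f - Pf}`, finite with no atom at `0`
    (μ : H → Measure ℝ) (hfin : ∀ f : H, IsFiniteMeasure (μ f))
    (hμ0 : ∀ f : H, μ f {0} = 0)
    (hrep : ∀ (f : H) (s t : ℝ), s < t →
      ‖(t - s)⁻¹ • (∫ τ in s..t, U τ f) - P f‖ ^ 2 = ∫ x, Fker (t - s) x ∂(μ f))
    -- `X` is a vector subspace of `H` with its own norm `nX`
    (X : Submodule ℂ H) (nX : H → ℝ)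
    (α : ℝ) (hα : α ∈ Set.Ico (0 : ℝ) 2) :
    -- direct part
    (∀ A : ℝ, 0 < A →
      (∀ f ∈ X, ∀ δ : ℝ, 0 < δ →
        (μ f (Set.Ioc (-δ) δ)).toReal ≤ A * nX f ^ 2 * δ ^ α) →
      ∀ s t : ℝ, s < t → ∀ f ∈ X,
        ‖(t - s)⁻¹ • (∫ τ in s..t, U τ f) - P f‖ ^ 2 ≤
          2 ^ (α + 1) / (2 - α) * A * (t - s) ^ (-α) * nX f ^ 2) ∧
    -- converse part
    (∀ B : ℝ, 0 < B →
      (∀ s t : ℝ, s < t → ∀ f ∈ X,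
        ‖(t - s)⁻¹ • (∫ τ in s..t, U τ f) - P f‖ ^ 2 ≤ B * (t - s) ^ (-α) * nX f ^ 2) →
      ∀ f ∈ X, ∀ δ : ℝ, 0 < δ →
        (μ f (Set.Ioc (-δ) δ)).toReal ≤ rho α / 2 ^ α * B * nX f ^ 2 * δ ^ α) := by
  refine ⟨fun A _ hdecay s t hst f hf => ?_, fun B hB hrate f hf δ hδ => ?_⟩
  · have := hfin f
    rw [hrep f s t hst]
    exact (integral_Fker_le_of_measureReal_Ioc_le hα.2 (sub_pos.2 hst) (hdecay f hf)).trans_eq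
      (by ring)
  · have := hfin f
    refine (measureReal_Ioc_le_of_integral_Fker_le (C := B * nX f ^ 2) (hμ0 f) hα.2.le
      (by positivity) hδ fun T hT => ?_).trans_eq (by ring)
    have hrateT := hrate 0 T hT f hf
    rw [hrep f 0 T hT, sub_zero] at hrateT
    exact hrateT.trans_eq (by ring)

theorem stmt10
    {H : Type*} [NormedAddCommGroup H] [InnerProductSpace ℂ H] [CompleteSpace H]
    (U : ℝ → H →L[ℂ] H)
    (hUgrp : ∀ a b : ℝ, U (a + b) = (U a).comp (U b))
    (hUiso : ∀ (τ : ℝ) (g : H), ‖U τ g‖ = ‖g‖)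
    (hcont : ∀ f : H, Continuous fun τ : ℝ => U τ f)
    -- `P` is the orthogonal projection onto the fixed vectors of the group
    (P : H →L[ℂ] H)
    (hfix : ∀ (τ : ℝ) (f : H), U τ (P f) = P f)
    (horth : ∀ f g : H, (∀ τ : ℝ, U τ g = g) → (inner ℂ (f - P f) g : ℂ) = 0)
    -- `μ f` is the spectral measure `σ_{f - Pf}`, finite with no atom at `0`
    (μ : H → Measure ℝ) (hfin : ∀ f : H, IsFiniteMeasure (μ f))
    (hμ0 : ∀ f : H, μ f {0} = 0)
    (hrep : ∀ (f : H) (s t : ℝ), s < t →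
      ‖(t - s)⁻¹ • (∫ τ in s..t, U τ f) - P f‖ ^ 2 = ∫ x, Fker (t - s) x ∂(μ f))
    -- `X` is a vector subspace of `H` with its own norm `nX`
    (X : Submodule ℂ H) (nX : H → ℝ)
    (hnX : ∀ f ∈ X, 0 ≤ nX f)
    (α : ℝ) (hα : α ∈ Set.Ico (0 : ℝ) 2) :
    -- direct part
    (∀ A : ℝ, 0 < A →
      (∀ f ∈ X, ∀ δ : ℝ, 0 < δ →
        (μ f (Set.Ioc (-δ) δ)).toReal ≤ A * nX f ^ 2 * δ ^ α) →
      ∀ s t : ℝ, s < t → ∀ f ∈ X,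
        ‖(t - s)⁻¹ • (∫ τ in s..t, U τ f) - P f‖ ^ 2 ≤
          2 ^ (α + 1) / (2 - α) * A * (t - s) ^ (-α) * nX f ^ 2) ∧
    -- converse part
    (∀ B : ℝ, 0 < B →
      (∀ s t : ℝ, s < t → ∀ f ∈ X,
        ‖(t - s)⁻¹ • (∫ τ in s..t, U τ f) - P f‖ ^ 2 ≤ B * (t - s) ^ (-α) * nX f ^ 2) →
      ∀ f ∈ X, ∀ δ : ℝ, 0 < δ →
        (μ f (Set.Ioc (-δ) δ)).toReal ≤ rho α / 2 ^ α * B * nX f ^ 2 * δ ^ α) :=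
  stmt10_general U P μ hfin hμ0 hrep X nX α hα
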